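/- Under the hypotheses of the explicit formula for p_n^{(q,β)}: if additionally β(1+z²) = q² + z², then p_n^{(q,β)}(υ(z)) = (q²;q)_n / (z^n ((q²+z²)/(1+z²);q)_n). -/

import Mathlib

/-!
The condition `β (1 + z²) = q² + z²` says that `(q² + z²)/(1 + z²) = β`, so the claimed value is
`c_n = (q²;q)_n / (z^n (β;q)_n)`. It suffices to check that `c_n` obeys the same three-term recurrence
as `p_n(z + z⁻¹)`. Dividing that recurrence by `c_n` leaves
`(1 + z²)(1 - β q^{n+1}) - z² (1 - q^{n+1}) = 1 - q² q^{n+1}`, which is the condition multiplied by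
`q^{n+1}`. The hypotheses `β < 1` and `0 < q < 1` keep every denominator `1 - β q^k` nonzero.
-/

/-- The finite q-Pochhammer symbol `(a;Q)_n = ∏_{j=0}^{n-1} (1 - a Q^j)`. -/
def qPoch (a Q : ℂ) (n : ℕ) : ℂ := ∏ j ∈ Finset.range n, (1 - a * Q ^ j)

@[simp]
theorem qPoch_zero (a Q : ℂ) : qPoch a Q 0 = 1 :=
  Finset.prod_range_zero _

theorem qPoch_succ (a Q : ℂ) (n : ℕ) : qPoch a Q (n + 1) = qPoch a Q n * (1 - a * Q ^ n) :=
  Finset.prod_range_succ _ n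

@[simp]
theorem qPoch_one (a Q : ℂ) : qPoch a Q 1 = 1 - a := by
  simp [qPoch_succ]

theorem qPoch_ne_zero {a Q : ℂ} (h : ∀ k, 1 - a * Q ^ k ≠ 0) (n : ℕ) : qPoch a Q n ≠ 0 :=
  Finset.prod_ne_zero_iff.mpr fun k _ => h k

theorem one_sub_mul_pow_ne_zero {β q : ℝ} (hβ : β < 1) (hq0 : 0 ≤ q) (hq1 : q ≤ 1) (k : ℕ) :
    (1 : ℂ) - β * q ^ k ≠ 0 := by
  have hqk : q ^ k ≤ 1 := pow_le_one₀ hq0 hq1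
  have : β * q ^ k < 1 := by
    rcases le_or_gt β 0 with h | h
    · nlinarith [pow_nonneg hq0 k]
    · nlinarith
  exact_mod_cast (sub_pos.mpr this).ne'

theorem eq_of_two_step_recurrence {α : Type*} {u v : ℕ → α} (F : ℕ → α → α → α)
    (h0 : u 0 = v 0) (h1 : u 1 = v 1)
    (hu : ∀ n, u (n + 2) = F n (u (n + 1)) (u n)) (hv : ∀ n, v (n + 2) = F n (v (n + 1)) (v n)) :
    u = v := by
  suffices h : ∀ n, u n = v n ∧ u (n + 1) = v (n + 1) from funext fun n => (h n).1
  intro n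
  induction n with
  | zero => exact ⟨h0, h1⟩
  | succ n ih => exact ⟨ih.2, by rw [hu, hv, ih.1, ih.2]⟩

noncomputable def closedForm (q b z : ℂ) (n : ℕ) : ℂ := qPoch (q ^ 2) q n / (z ^ n * qPoch b q n)

theorem closedForm_recurrence {q b z : ℂ} (hz : z ≠ 0) (hb : ∀ k, 1 - b * q ^ k ≠ 0)
    (hspec : b * (1 + z ^ 2) = q ^ 2 + z ^ 2) (n : ℕ) :
    closedForm q b z (n + 2) = (z + z⁻¹) * closedForm q b z (n + 1) -
      (1 - q ^ (n + 1)) / (1 - b * q ^ n) * ((1 - q ^ (n + 2)) / (1 - b * q ^ (n + 1))) *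
        closedForm q b z n := by
  have key : (1 + z ^ 2) * (1 - b * q ^ (n + 1)) - z ^ 2 * (1 - q ^ (n + 1)) =
      1 - q ^ 2 * q ^ (n + 1) := by
    linear_combination (-q ^ (n + 1)) * hspec
  have hB := qPoch_ne_zero hb n
  have hb0 : 1 - q ^ n * b ≠ 0 := by simpa only [mul_comm] using hb n
  have hb1 : 1 - q ^ (n + 1) * b ≠ 0 := by simpa only [mul_comm] using hb (n + 1)
  simp only [closedForm, qPoch_succ]
  field_simp
  linear_combination (-qPoch (q ^ 2) q n * z ^ (2 * n + 2) * (1 - q ^ 2 * q ^ n)) * key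

theorem closedForm_zero (q b z : ℂ) : closedForm q b z 0 = 1 := by
  simp [closedForm]

theorem closedForm_one {q b z : ℂ} (hz : z ≠ 0) (hb : 1 - b ≠ 0)
    (hspec : b * (1 + z ^ 2) = q ^ 2 + z ^ 2) : closedForm q b z 1 = z + z⁻¹ := by
  simp only [closedForm, qPoch_one, pow_one]
  field_simp
  linear_combination hspec

theorem stmt_13 (q β : ℝ) (hq : q ∈ Set.Ioo (0 : ℝ) 1) (hβ : β < 1)
    (z : ℂ) (hz : z ≠ 0)
    (hspec : (β : ℂ) * (1 + z ^ 2) = (q : ℂ) ^ 2 + z ^ 2)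
    (p : ℕ → ℂ → ℂ)
    (hp0 : ∀ x, p 0 x = 1) (hp1 : ∀ x, p 1 x = x)
    (hprec : ∀ n : ℕ, 1 ≤ n → ∀ x : ℂ,
      p (n + 1) x = x * p n x -
        ((1 - (q : ℂ) ^ n) / (1 - (β : ℂ) * (q : ℂ) ^ (n - 1))) *
        ((1 - (q : ℂ) ^ (n + 1)) / (1 - (β : ℂ) * (q : ℂ) ^ n)) * p (n - 1) x) :
    ∀ n : ℕ, p n (z + z⁻¹) =
      qPoch ((q : ℂ) ^ 2) (q : ℂ) n /
        (z ^ n * qPoch (((q : ℂ) ^ 2 + z ^ 2) / (1 + z ^ 2)) (q : ℂ) n) := by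
  obtain ⟨hq0, hq1⟩ := hq
  have hb := one_sub_mul_pow_ne_zero hβ hq0.le hq1.le
  have h1z : 1 + z ^ 2 ≠ 0 := by
    intro h
    have hq2 : ((q ^ 2 : ℝ) : ℂ) = 1 := by push_cast; linear_combination (β - 1) * h - hspec
    nlinarith [show q ^ 2 = 1 by exact_mod_cast hq2]
  have hβz : ((q : ℂ) ^ 2 + z ^ 2) / (1 + z ^ 2) = β := by
    rw [div_eq_iff h1z]
    exact hspec.symm
  intro n
  rw [hβz]
  refine congrFun (eq_of_two_step_recurrence (u := fun m => p m (z + z⁻¹))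
    (fun k x y => (z + z⁻¹) * x - (1 - (q : ℂ) ^ (k + 1)) / (1 - β * q ^ k) *
      ((1 - (q : ℂ) ^ (k + 2)) / (1 - β * q ^ (k + 1))) * y)
    (hp0 _ ▸ (closedForm_zero _ _ _).symm) ?_ (fun k => ?_)
    (closedForm_recurrence hz hb hspec)) n
  · rw [hp1, closedForm_one hz (by simpa using hb 0) hspec]
  · simpa only [Nat.add_sub_cancel] using hprec (k + 1) k.succ_pos (z + z⁻¹)
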